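/- arXiv:0802.3861 — 2 statements merged into one kernel-verified Lean document; each statement's English description precedes it below -/
import Mathlib

section
/- Let f be a regular function on B(0,R), f^c its regular conjugate and f^s its symmetrization, and define T_f(q) = f^c(q)⁻¹ q f^c(q) for q ∈ B(0,R) ∖ Z_{f^s}. Then for all such q, f^{-*}(q) = f^s(q)⁻¹ f^c(q) = ( f(T_f(q)) )⁻¹. -/
open Quaternion Finset

/-!
Write `c = f^c(q)`. Multiplying out the two absolutely convergent series for `f^c(q)` and `f(q)`,
but keeping every power of `q` to the left of the coefficients, gives `f^s(q) = ∑ₙ qⁿ c aₙ`.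
On the other hand `(c⁻¹ q c)ⁿ = c⁻¹ qⁿ c`, so `c f(c⁻¹ q c) = ∑ₙ qⁿ c aₙ` as well.
Hence `c f(T_f(q)) = f^s(q)`, which forces `c ≠ 0` and gives `f(T_f(q))⁻¹ = f^s(q)⁻¹ c`.
-/

theorem HasSum.sum_antidiagonal {α : Type*} [AddCommMonoid α] [TopologicalSpace α]
    [ContinuousAdd α] [RegularSpace α] {F : ℕ × ℕ → α} {s : α} (h : HasSum F s) :
    HasSum (fun n => ∑ p ∈ antidiagonal n, F p) s :=
  ((Finset.HasAntidiagonal.sigmaAntidiagonalEquivProd.hasSum_iff).mpr h).sigma fun n =>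
    (Finset.sum_coe_sort (antidiagonal n) F) ▸ hasSum_fintype _

theorem exists_mem_ball_zero_norm_gt {D : Type*} [NormedDivisionRing D] [NormedAlgebra ℝ D]
    {q : D} {R : ℝ} (hq : q ∈ Metric.ball (0 : D) R) :
    ∃ p ∈ Metric.ball (0 : D) R, ‖q‖ < ‖p‖ := by
  rw [mem_ball_zero_iff] at hq
  have hr : 0 < (‖q‖ + R) / 2 := by linarith [norm_nonneg q]
  refine ⟨algebraMap ℝ D ((‖q‖ + R) / 2), ?_, ?_⟩ <;>
    simp only [mem_ball_zero_iff, norm_algebraMap', Real.norm_of_nonneg hr.le] <;> linarith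

section NormedDivisionRing

variable {D : Type*} [NormedDivisionRing D]

theorem norm_inv_mul_mul_self {c : D} (hc : c ≠ 0) (q : D) : ‖c⁻¹ * q * c‖ = ‖q‖ := by
  rw [norm_mul, norm_mul, norm_inv, mul_comm ‖c‖⁻¹, mul_assoc,
    inv_mul_cancel₀ (norm_ne_zero_iff.mpr hc), mul_one]

theorem summable_norm_pow_mul_of_summable {p q : D} {a : ℕ → D}
    (ha : Summable fun n => p ^ n * a n) (hq : ‖q‖ < ‖p‖) :
    Summable fun n => ‖q ^ n * a n‖ := by
  obtain ⟨C, hC⟩ := ha.tendsto_atTop_zero.norm.bddAbove_range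
  have hp : 0 < ‖p‖ := (norm_nonneg q).trans_lt hq
  refine .of_nonneg_of_le (fun n => norm_nonneg _) (fun n => ?_)
    ((summable_geometric_of_lt_one (by positivity) ((div_lt_one hp).2 hq)).mul_left C)
  calc ‖q ^ n * a n‖ = ‖p ^ n * a n‖ * (‖q‖ / ‖p‖) ^ n := by
        rw [norm_mul, norm_mul, norm_pow, norm_pow, div_pow]
        field_simp
    _ ≤ C * (‖q‖ / ‖p‖) ^ n := by gcongr; exact hC ⟨n, rfl⟩

theorem summable_pow_add_mul_mul [CompleteSpace D] {q : D} {a b : ℕ → D}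
    (ha : Summable fun n => ‖q ^ n * a n‖) (hb : Summable fun n => ‖q ^ n * b n‖) :
    Summable fun p : ℕ × ℕ => q ^ (p.1 + p.2) * (b p.2 * a p.1) := by
  refine .of_norm ((ha.mul_of_nonneg hb (fun _ => norm_nonneg _) fun _ => norm_nonneg _).congr
    fun p => ?_)
  simp only [norm_mul, norm_pow, pow_add]
  ring

theorem HasSum.pow_mul_mul_of_hasSum_cauchy [CompleteSpace D] {q c s : D} {a b : ℕ → D}
    (ha : Summable fun n => ‖q ^ n * a n‖) (hb : Summable fun n => ‖q ^ n * b n‖)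
    (hc : HasSum (fun n => q ^ n * b n) c)
    (hs : HasSum (fun n => q ^ n * ∑ k ∈ range (n + 1), b k * a (n - k)) s) :
    HasSum (fun j => q ^ j * (c * a j)) s := by
  obtain ⟨S, hS⟩ := summable_pow_add_mul_mul ha hb
  have hrows : HasSum (fun j => q ^ j * (c * a j)) S :=
    hS.prod_fiberwise fun j => ((hc.mul_right (a j)).mul_left (q ^ j)).congr_fun fun k => by
      simp only [pow_add, mul_assoc]
  have hdiag : HasSum (fun n => q ^ n * ∑ k ∈ range (n + 1), b k * a (n - k)) S := by
    refine hS.sum_antidiagonal.congr_fun fun n => ?_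
    rw [Finset.Nat.sum_antidiagonal_eq_sum_range_succ (fun j k => q ^ (j + k) * (b k * a j)),
      ← Finset.sum_range_reflect, Finset.mul_sum]
    refine Finset.sum_congr rfl fun k hk => ?_
    have hk : k ≤ n := Nat.lt_succ_iff.mp (Finset.mem_range.mp hk)
    rw [show n + 1 - 1 - k = n - k by omega, Nat.sub_sub_self hk, Nat.add_sub_cancel' hk]
  exact hdiag.unique hs ▸ hrows

theorem HasSum.mul_left_of_conj {c q y : D} {a : ℕ → D} (hc : c ≠ 0)
    (h : HasSum (fun n => (c⁻¹ * q * c) ^ n * a n) y) :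
    HasSum (fun n => q ^ n * (c * a n)) (c * y) :=
  (h.mul_left c).congr_fun fun n => by
    rw [GroupWithZero.conj_pow₀ hc]
    simp only [mul_assoc, mul_inv_cancel_left₀ hc]

end NormedDivisionRing

/-- With `T_f(q) = f^c(q)⁻¹ q f^c(q)`, the reciprocal satisfies
`f^{-*}(q) = f^s(q)⁻¹ f^c(q) = (f(T_f(q)))⁻¹` on `B(0,R) ∖ Z_{f^s}`. -/
theorem reciprocal_eq_inverse_at_transform
    (R : ℝ) (a : ℕ → ℍ[ℝ]) (f fc fs : ℍ[ℝ] → ℍ[ℝ])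
    (hf : ∀ q ∈ Metric.ball (0 : ℍ[ℝ]) R, HasSum (fun n => q ^ n * a n) (f q))
    (hfc : ∀ q ∈ Metric.ball (0 : ℍ[ℝ]) R,
      HasSum (fun n => q ^ n * star (a n)) (fc q))
    (hfs : ∀ q ∈ Metric.ball (0 : ℍ[ℝ]) R,
      HasSum (fun n => q ^ n * ∑ k ∈ range (n + 1), star (a k) * a (n - k)) (fs q)) :
    ∀ q ∈ Metric.ball (0 : ℍ[ℝ]) R, fs q ≠ 0 →
      fc q ≠ 0 ∧ (fs q)⁻¹ * fc q = (f ((fc q)⁻¹ * q * fc q))⁻¹ := by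
  intro q hq hs
  obtain ⟨p, hp, hqp⟩ := exists_mem_ball_zero_norm_gt hq
  have ha : Summable fun n => ‖q ^ n * a n‖ :=
    summable_norm_pow_mul_of_summable (hf p hp).summable hqp
  have hb : Summable fun n => ‖q ^ n * star (a n)‖ := by
    simpa only [norm_mul, norm_star] using ha
  have hrows : HasSum (fun j => q ^ j * (fc q * a j)) (fs q) :=
    .pow_mul_mul_of_hasSum_cauchy ha hb (hfc q hq) (hfs q hq)
  have hfc0 : fc q ≠ 0 := by
    intro h
    exact hs (hrows.unique (by simpa only [h, zero_mul, mul_zero] using hasSum_zero))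
  have hT : (fc q)⁻¹ * q * fc q ∈ Metric.ball (0 : ℍ[ℝ]) R := by
    rwa [mem_ball_zero_iff, norm_inv_mul_mul_self hfc0, ← mem_ball_zero_iff]
  have hkey : fc q * f ((fc q)⁻¹ * q * fc q) = fs q :=
    ((hf _ hT).mul_left_of_conj hfc0).unique hrows
  refine ⟨hfc0, ?_⟩
  rw [← hkey, mul_inv_rev, inv_mul_cancel_right₀ hfc0]
end

section
/- (Maximum Modulus Principle) Let Ω = B(0,R) ∖ ℰ where ℰ is a closed subset of B(0,R) consisting of isolated points and isolated 2-spheres of the form x + y𝕊, and let f : Ω → ℍ be regular. If |f| has a local maximum point p ∈ Ω, then f is constant on Ω. -/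
open Quaternion

/-- Cullen regularity: the restriction of `f` to each slice `L_I = ℝ + Iℝ` satisfies
the Cauchy–Riemann equation `∂f/∂y = I ∂f/∂x`. -/
def SliceRegularOn (Ω : Set ℍ[ℝ]) (f : ℍ[ℝ] → ℍ[ℝ]) : Prop :=
  ∀ I : ℍ[ℝ], I ^ 2 = -1 → ∀ x y : ℝ, (x : ℍ[ℝ]) + y • I ∈ Ω →
    DifferentiableAt ℝ (fun p : ℝ × ℝ => f ((p.1 : ℍ[ℝ]) + p.2 • I)) (x, y) ∧
    fderiv ℝ (fun p : ℝ × ℝ => f ((p.1 : ℍ[ℝ]) + p.2 • I)) (x, y) (0, 1) =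
      I * fderiv ℝ (fun p : ℝ × ℝ => f ((p.1 : ℍ[ℝ]) + p.2 • I)) (x, y) (1, 0)

/-- The 2-sphere `x + y𝕊`. -/
def sphereSet (x y : ℝ) : Set ℍ[ℝ] :=
  {q | ∃ K : ℍ[ℝ], K ^ 2 = -1 ∧ q = (x : ℍ[ℝ]) + y • K}

/-!
On a slice `L_I ≅ ℂ`, a regular `f` is a holomorphic function of one complex variable with values
in `ℍ`, viewed as a complex normed space through left multiplication by `L_I`; and `Ω ∩ L_I` is a
disc minus a countable set, hence connected. The complex maximum modulus principle makes `f`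
constant near `p` on the slice through `p`, and the identity principle spreads this constant to
all of that slice, in particular to the real points of `Ω`. These accumulate in every slice, so
the identity principle applied once more makes `f` equal to the same constant on every slice.
-/

open Metric Set Filter Topology

theorem Set.countable_of_forall_exists_nhds_inter_countable {α : Type*} [TopologicalSpace α]
    [SecondCountableTopology α] {s : Set α} (h : ∀ x ∈ s, ∃ V ∈ 𝓝 x, (V ∩ s).Countable) :
    s.Countable := by
  choose! V hV hVs using h
  obtain ⟨t, hts, htc, hst⟩ :=
    TopologicalSpace.countable_cover_nhdsWithin fun x hx => mem_nhdsWithin_of_mem_nhds (hV x hx)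
  refine (htc.biUnion fun x hx => hVs x (hts hx)).mono fun y hy => ?_
  obtain ⟨x, hx, hyx⟩ := mem_iUnion₂.1 (hst hy)
  exact mem_biUnion hx ⟨hyx, hy⟩

theorem Set.Countable.isPreconnected_ball_diff {E : Type*} [NormedAddCommGroup E]
    [NormedSpace ℝ E] (h : 1 < Module.rank ℝ E) {s : Set E} (hs : s.Countable) (c : E) (r : ℝ) :
    IsPreconnected (ball c r \ s) := by
  rcases le_or_gt r 0 with hr | hr
  · simp [ball_eq_empty.2 hr, isPreconnected_empty]
  set e := OpenPartialHomeomorph.univBall c r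
  have he : Function.Injective e := by
    simpa [injOn_univ, e] using e.injOn
  have hrange : range e = ball c r := by
    rw [← image_univ, ← OpenPartialHomeomorph.univBall_source c r, e.image_source_eq_target,
      OpenPartialHomeomorph.univBall_target c hr]
  rw [← hrange, ← image_compl_preimage]
  exact ((hs.preimage he).isConnected_compl_of_one_lt_rank h).isPreconnected.image _
    (OpenPartialHomeomorph.continuous_univBall c r).continuousOn

theorem Set.Countable.exists_ofReal_mem_ball_diff {s : Set ℂ} (hs : s.Countable) {R : ℝ}
    (hR : 0 < R) : ∃ t : ℝ, (t : ℂ) ∈ ball 0 R \ s := by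
  obtain ⟨t, ht, hts⟩ := ((hs.preimage Complex.ofReal_injective).dense_compl ℝ).inter_open_nonempty
    (ball 0 R) isOpen_ball ⟨0, mem_ball_self hR⟩
  exact ⟨t, by simpa using ht, hts⟩

namespace Quaternion

variable {I : ℍ[ℝ]}

theorem normSq_eq_one_of_sq_eq_neg_one (hI : I ^ 2 = -1) : normSq I = 1 := by
  have h := congrArg normSq hI
  rw [map_pow, normSq_neg, map_one] at h
  exact (pow_eq_one_iff_of_nonneg normSq_nonneg two_ne_zero).1 h

theorem re_eq_zero_of_sq_eq_neg_one (hI : I ^ 2 = -1) : I.re = 0 :=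
  sq_eq_neg_normSq.1 (by rw [hI, normSq_eq_one_of_sq_eq_neg_one hI, coe_one])

theorem norm_eq_one_of_sq_eq_neg_one (hI : I ^ 2 = -1) : ‖I‖ = 1 := by
  have h := normSq_eq_one_of_sq_eq_neg_one hI
  rw [normSq_eq_norm_mul_self] at h
  nlinarith [norm_nonneg I]

/-- The parametrisation `x + iy ↦ x + yI` of the slice `L_I`. -/
noncomputable def slice (I : ℍ[ℝ]) (hI : I ^ 2 = -1) : ℂ →ₐ[ℝ] ℍ[ℝ] :=
  Complex.liftAux I (by rwa [← sq])

theorem slice_apply (hI : I ^ 2 = -1) (z : ℂ) : slice I hI z = (z.re : ℍ[ℝ]) + z.im • I := by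
  rw [slice, Complex.liftAux_apply, algebraMap_def]

@[simp]
theorem slice_ofReal (hI : I ^ 2 = -1) (t : ℝ) : slice I hI t = t := by
  simp [slice]

@[simp]
theorem re_slice (hI : I ^ 2 = -1) (z : ℂ) : (slice I hI z).re = z.re := by
  simp [slice_apply, re_eq_zero_of_sq_eq_neg_one hI]

theorem normSq_slice (hI : I ^ 2 = -1) (z : ℂ) : normSq (slice I hI z) = Complex.normSq z := by
  have h1 := normSq_eq_one_of_sq_eq_neg_one hI
  have h0 := re_eq_zero_of_sq_eq_neg_one hI
  rw [normSq_def'] at h1 ⊢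
  simp only [slice_apply, Complex.normSq_apply, re_add, imI_add, imJ_add, imK_add, re_coe,
    imI_coe, imJ_coe, imK_coe, re_smul, imI_smul, imJ_smul, imK_smul, smul_eq_mul, h0] at h1 ⊢
  linear_combination z.im ^ 2 * h1

theorem norm_slice (hI : I ^ 2 = -1) (z : ℂ) : ‖slice I hI z‖ = ‖z‖ := by
  rw [← sq_eq_sq₀ (norm_nonneg _) (norm_nonneg _), ← Complex.normSq_eq_norm_sq, sq,
    ← normSq_eq_norm_mul_self, normSq_slice]

theorem isometry_slice (hI : I ^ 2 = -1) : Isometry (slice I hI) :=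
  AddMonoidHomClass.isometry_of_norm _ (norm_slice hI)

theorem preimage_slice_ball_zero (hI : I ^ 2 = -1) (R : ℝ) :
    slice I hI ⁻¹' ball 0 R = ball 0 R := by
  ext z
  simp [norm_slice hI]

theorem exists_slice_eq (q : ℍ[ℝ]) : ∃ (I : ℍ[ℝ]) (hI : I ^ 2 = -1) (z : ℂ), slice I hI z = q := by
  by_cases hq : q.im = 0
  · have hi : (equivProd ℝ).symm (0, 1, 0, 0) ^ 2 = -1 := by ext <;> simp [sq]
    refine ⟨_, hi, q.re, ?_⟩
    simpa [hq] using re_add_im q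
  · have hn : ‖q.im‖ ≠ 0 := norm_ne_zero_iff.2 hq
    refine ⟨‖q.im‖⁻¹ • q.im, ?_, ⟨q.re, ‖q.im‖⟩, ?_⟩
    · rw [smul_pow, im_sq, normSq_eq_norm_mul_self, smul_neg, ← coe_mul_eq_smul, ← coe_mul,
        ← sq, inv_pow, inv_mul_cancel₀ (pow_ne_zero 2 hn), coe_one]
    · rw [slice_apply, smul_smul, mul_inv_cancel₀ hn, one_smul, re_add_im]

theorem preimage_slice_sphereSet_subset (hI : I ^ 2 = -1) (x y : ℝ) :
    slice I hI ⁻¹' sphereSet x y ⊆ {⟨x, y⟩, ⟨x, -y⟩} := by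
  rintro z ⟨K, hK, hz⟩
  have hre : z.re = x := by
    simpa [re_eq_zero_of_sq_eq_neg_one hK] using congrArg (·.re) hz
  have him : |z.im| = |y| := by
    rw [slice_apply, hre] at hz
    simpa [norm_smul, norm_eq_one_of_sq_eq_neg_one hI, norm_eq_one_of_sq_eq_neg_one hK]
      using congrArg norm (add_left_cancel hz)
  rcases abs_eq_abs.1 him with h | h
  · exact Or.inl (Complex.ext hre h)
  · exact Or.inr (Complex.ext hre h)

theorem finite_preimage_slice_sphereSet (hI : I ^ 2 = -1) (x y : ℝ) :
    (slice I hI ⁻¹' sphereSet x y).Finite :=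
  (toFinite _).subset (preimage_slice_sphereSet_subset hI x y)

theorem countable_preimage_slice (hI : I ^ 2 = -1) {E : Set ℍ[ℝ]}
    (hE : ∀ e ∈ E, ∃ U ∈ 𝓝 e, (slice I hI ⁻¹' (U ∩ E)).Finite) :
    (slice I hI ⁻¹' E).Countable := by
  refine countable_of_forall_exists_nhds_inter_countable fun z hz => ?_
  obtain ⟨U, hU, hUE⟩ := hE _ hz
  exact ⟨slice I hI ⁻¹' U, (isometry_slice hI).continuous.continuousAt hU, hUE.countable⟩

/-- `ℍ` as a normed `ℂ`-space, `z ∈ ℂ` acting by left multiplication by `slice I hI z`. -/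
noncomputable abbrev sliceNormedSpace (hI : I ^ 2 = -1) : NormedSpace ℂ ℍ[ℝ] :=
  letI := Module.compHom ℍ[ℝ] (slice I hI).toRingHom
  { norm_smul_le c q := by
      change ‖slice I hI c * q‖ ≤ ‖c‖ * ‖q‖
      rw [norm_mul, norm_slice] }

theorem sliceNormedSpace_isScalarTower (hI : I ^ 2 = -1) :
    letI := sliceNormedSpace hI
    IsScalarTower ℝ ℂ ℍ[ℝ] :=
  letI := sliceNormedSpace hI
  ⟨fun r c q => by
    change slice I hI (r • c) * q = r • (slice I hI c * q)
    rw [map_smul, smul_mul_assoc]⟩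

end Quaternion

open Quaternion

section SliceRegular

variable {Ω : Set ℍ[ℝ]} {f : ℍ[ℝ] → ℍ[ℝ]} {I : ℍ[ℝ]}

theorem SliceRegularOn.differentiableOn_slice (hf : SliceRegularOn Ω f) (hI : I ^ 2 = -1) :
    letI := sliceNormedSpace hI
    DifferentiableOn ℂ (f ∘ slice I hI) (slice I hI ⁻¹' Ω) := by
  let := sliceNormedSpace hI
  have := sliceNormedSpace_isScalarTower hI
  intro z hz
  obtain ⟨hd, hCR⟩ := hf I hI z.re z.im (by rwa [← slice_apply])
  set g := fun p : ℝ × ℝ => f ((p.1 : ℍ[ℝ]) + p.2 • I)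
  set L := fderiv ℝ g (z.re, z.im)
  have hfg : f ∘ slice I hI = g ∘ Complex.equivRealProdCLM := funext fun w => by
    simp [g, slice_apply]
  have hL : HasFDerivAt (f ∘ slice I hI) (L.comp (Complex.equivRealProdCLM : ℂ →L[ℝ] ℝ × ℝ)) z := by
    rw [hfg]
    exact hd.hasFDerivAt.comp z Complex.equivRealProdCLM.hasFDerivAt
  -- Cauchy–Riemann makes the real derivative left multiplication by `slice I hI u`
  have hlin : (ContinuousLinearMap.toSpanSingleton ℂ (L (1, 0))).restrictScalars ℝ =
      L.comp (Complex.equivRealProdCLM : ℂ →L[ℝ] ℝ × ℝ) := by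
    refine ContinuousLinearMap.ext fun u => ?_
    have hu : ((u.re, u.im) : ℝ × ℝ) = u.re • (1, 0) + u.im • (0, 1) := by simp
    change slice I hI u * L (1, 0) = L (u.re, u.im)
    rw [hu, map_add, map_smul, map_smul, hCR, slice_apply, add_mul, smul_mul_assoc,
      coe_mul_eq_smul]
  exact (hasFDerivAt_of_restrictScalars ℝ hL hlin).differentiableAt.differentiableWithinAt

theorem SliceRegularOn.eqOn_slice_of_frequently_eq (hf : SliceRegularOn Ω f) (hΩ : IsOpen Ω)
    (hI : I ^ 2 = -1) (hconn : IsPreconnected (slice I hI ⁻¹' Ω)) {z₀ : ℂ}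
    (hz₀ : slice I hI z₀ ∈ Ω) {w : ℍ[ℝ]} (hw : ∃ᶠ z in 𝓝[≠] z₀, f (slice I hI z) = w) :
    EqOn (f ∘ slice I hI) (fun _ => w) (slice I hI ⁻¹' Ω) := by
  let := sliceNormedSpace hI
  have := sliceNormedSpace_isScalarTower hI
  have hU : IsOpen (slice I hI ⁻¹' Ω) := hΩ.preimage (isometry_slice hI).continuous
  exact ((hf.differentiableOn_slice hI).analyticOnNhd hU).eqOn_of_preconnected_of_frequently_eq
    analyticOnNhd_const hconn hz₀ hw

theorem SliceRegularOn.eventually_eq_of_isLocalMax_norm (hf : SliceRegularOn Ω f)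
    (hΩ : IsOpen Ω) (hI : I ^ 2 = -1) {z₀ : ℂ} (hz₀ : slice I hI z₀ ∈ Ω)
    (hmax : IsLocalMax (‖f ·‖) (slice I hI z₀)) :
    ∀ᶠ z in 𝓝 z₀, f (slice I hI z) = f (slice I hI z₀) := by
  let := sliceNormedSpace hI
  have := sliceNormedSpace_isScalarTower hI
  have hcont := (isometry_slice hI).continuous
  exact Complex.eventually_eq_of_isLocalMax_norm
    ((hf.differentiableOn_slice hI).eventually_differentiableAt
      ((hΩ.preimage hcont).mem_nhds hz₀))
    (hmax.comp_continuous hcont.continuousAt)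

theorem SliceRegularOn.eqOn_slice_of_eqOn_real (hf : SliceRegularOn Ω f) (hΩ : IsOpen Ω)
    (hI : I ^ 2 = -1) (hconn : IsPreconnected (slice I hI ⁻¹' Ω)) {t₀ : ℝ}
    (ht₀ : (t₀ : ℍ[ℝ]) ∈ Ω) {w : ℍ[ℝ]} (hw : ∀ t : ℝ, (t : ℍ[ℝ]) ∈ Ω → f t = w) :
    EqOn (f ∘ slice I hI) (fun _ => w) (slice I hI ⁻¹' Ω) := by
  refine hf.eqOn_slice_of_frequently_eq hΩ hI hconn (z₀ := t₀) (by simpa using ht₀) ?_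
  have hreal : Tendsto ((↑) : ℝ → ℂ) (𝓝[≠] t₀) (𝓝[≠] (t₀ : ℂ)) :=
    tendsto_nhdsWithin_of_tendsto_nhds_of_eventually_within _
      (Complex.continuous_ofReal.continuousAt.mono_left nhdsWithin_le_nhds)
      (eventually_mem_nhdsWithin.mono fun t ht => Complex.ofReal_injective.ne ht)
  have hΩt : ∀ᶠ t : ℝ in 𝓝 t₀, (t : ℍ[ℝ]) ∈ Ω :=
    continuous_coe.continuousAt.preimage_mem_nhds (hΩ.mem_nhds ht₀)
  exact hreal.frequently ((hΩt.filter_mono nhdsWithin_le_nhds).frequently.mono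
    fun t ht => by simpa using hw t ht)

end SliceRegular

theorem maximum_modulus_principle_general
    (R : ℝ) (E : Set ℍ[ℝ])
    (hEiso : ∀ e ∈ E, ∃ S : Set ℍ[ℝ], e ∈ S ∧ S ⊆ E ∧
      ((∃ p, S = {p}) ∨ (∃ x y : ℝ, y ≠ 0 ∧ S = sphereSet x y)) ∧
      ∃ U : Set ℍ[ℝ], IsOpen U ∧ S ⊆ U ∧ U ∩ E = S)
    (hopen : IsOpen (Metric.ball (0 : ℍ[ℝ]) R \ E))
    (f : ℍ[ℝ] → ℍ[ℝ])
    (hf : SliceRegularOn (Metric.ball (0 : ℍ[ℝ]) R \ E) f)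
    (p : ℍ[ℝ]) (hp : p ∈ Metric.ball (0 : ℍ[ℝ]) R \ E)
    (hmax : IsLocalMaxOn (fun q => ‖f q‖) (Metric.ball (0 : ℍ[ℝ]) R \ E) p) :
    ∃ w : ℍ[ℝ], ∀ q ∈ Metric.ball (0 : ℍ[ℝ]) R \ E, f q = w := by
  have hcount (I : ℍ[ℝ]) (hI : I ^ 2 = -1) : (slice I hI ⁻¹' E).Countable := by
    refine countable_preimage_slice hI fun e he => ?_
    obtain ⟨S, heS, -, hS, U, hU, hSU, hUE⟩ := hEiso e he
    refine ⟨U, hU.mem_nhds (hSU heS), ?_⟩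
    rcases hS with ⟨q, rfl⟩ | ⟨x, y, -, rfl⟩ <;> rw [hUE]
    exacts [(finite_singleton q).preimage (isometry_slice hI).injective.injOn,
      finite_preimage_slice_sphereSet hI x y]
  have hpre (I : ℍ[ℝ]) (hI : I ^ 2 = -1) :
      slice I hI ⁻¹' (ball 0 R \ E) = ball 0 R \ slice I hI ⁻¹' E := by
    rw [preimage_sdiff, preimage_slice_ball_zero]
  have hconn (I : ℍ[ℝ]) (hI : I ^ 2 = -1) : IsPreconnected (slice I hI ⁻¹' (ball 0 R \ E)) := by
    rw [hpre I hI]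
    exact (hcount I hI).isPreconnected_ball_diff (by simp) 0 R
  obtain ⟨I, hI, z₀, rfl⟩ := exists_slice_eq p
  have hconst := hf.eqOn_slice_of_frequently_eq hopen hI (hconn I hI) hp
    (hf.eventually_eq_of_isLocalMax_norm hopen hI hp (hmax.isLocalMax (hopen.mem_nhds hp))
      |>.filter_mono nhdsWithin_le_nhds |>.frequently)
  obtain ⟨t₀, ht₀⟩ := (hcount I hI).exists_ofReal_mem_ball_diff (pos_of_mem_ball hp.1)
  refine ⟨f (slice I hI z₀), fun q hq => ?_⟩
  obtain ⟨J, hJ, z, rfl⟩ := exists_slice_eq q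
  refine hf.eqOn_slice_of_eqOn_real hopen hJ (hconn J hJ) (t₀ := t₀) ?_ (fun t ht => ?_) hq
  · simpa [← hpre I hI] using ht₀
  · have h := hconst (show slice I hI t ∈ _ by rwa [slice_ofReal])
    rwa [Function.comp_apply, slice_ofReal] at h

/-- Maximum Modulus Principle on `B(0,R)` minus a closed set `ℰ` consisting of
isolated points and isolated 2-spheres: if `|f|` has a local maximum point in
`Ω = B(0,R) ∖ ℰ`, then `f` is constant on `Ω`. -/
theorem maximum_modulus_principle
    (R : ℝ) (E : Set ℍ[ℝ]) (hE : E ⊆ Metric.ball (0 : ℍ[ℝ]) R)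
    (hEiso : ∀ e ∈ E, ∃ S : Set ℍ[ℝ], e ∈ S ∧ S ⊆ E ∧
      ((∃ p, S = {p}) ∨ (∃ x y : ℝ, y ≠ 0 ∧ S = sphereSet x y)) ∧
      ∃ U : Set ℍ[ℝ], IsOpen U ∧ S ⊆ U ∧ U ∩ E = S)
    (hopen : IsOpen (Metric.ball (0 : ℍ[ℝ]) R \ E))
    (f : ℍ[ℝ] → ℍ[ℝ])
    (hf : SliceRegularOn (Metric.ball (0 : ℍ[ℝ]) R \ E) f)
    (p : ℍ[ℝ]) (hp : p ∈ Metric.ball (0 : ℍ[ℝ]) R \ E)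
    (hmax : IsLocalMaxOn (fun q => ‖f q‖) (Metric.ball (0 : ℍ[ℝ]) R \ E) p) :
    ∃ w : ℍ[ℝ], ∀ q ∈ Metric.ball (0 : ℍ[ℝ]) R \ E, f q = w :=
  maximum_modulus_principle_general R E hEiso hopen f hf p hp hmax
end
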